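/- Let h be a positive integer, let φ(x_1,…,x_h) = c_1x_1 + ⋯ + c_hx_h be a linear form with integer coefficients satisfying condition N, and set C = Σ_{i=1}^h |c_i|. Let B = {b_1 < b_2 < ⋯} be a strictly increasing sequence of integers and let m ≥ 0 be such that b_1 > m and b_{k+1} > C·b_k + (C+1)·m for all positive integers k. Then there exist a sequence a_1, a_2, … of integers forming a φ-Sidon set A = {a_k : k ≥ 1} and a constant m_0 > 0 such that |a_k − b_k| < m_0 for all positive integers k. -/

import Mathlib

/-!
Already `B` itself is a `φ`-Sidon set, so one may take `a = b`. Suppose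
`∑ cᵢ b_{f(i)} = ∑ cᵢ b_{g(i)}` with all indices at most `N + 1`, and let `I`, `J` be the positions
where `f`, resp. `g`, takes the top index `N + 1`. The remaining terms of each side lie in
`[0, b_N]`, so the two sides differ from `(∑_{i∈I} cᵢ) b_{N+1}` and `(∑_{i∈J} cᵢ) b_{N+1}` by
quantities whose difference is at most `C b_N < b_{N+1}`. Hence `∑_{i∈I} cᵢ = ∑_{i∈J} cᵢ`, which by
condition N forces `I = J`; the top terms then cancel, and induction on `N` gives `f = g`.
-/

/-- `A` is a Sidon set for the linear form `φ(x₁,…,x_h) = c₁x₁ + ⋯ + c_hx_h`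
with integer coefficients `c`. -/
def IsSidon {h : ℕ} (c : Fin h → ℤ) (A : Set ℤ) : Prop :=
  ∀ a a' : Fin h → ℤ, (∀ i, a i ∈ A) → (∀ i, a' i ∈ A) →
    (∑ i, c i * a i) = (∑ i, c i * a' i) → a = a'

/-- The linear form with coefficients `c` satisfies condition N. -/
def ConditionN {h : ℕ} (c : Fin h → ℤ) : Prop :=
  ¬ ∃ I₁ I₂ : Finset (Fin h), Disjoint I₁ I₂ ∧ (I₁.Nonempty ∨ I₂.Nonempty) ∧
      ∑ i ∈ I₁, c i = ∑ i ∈ I₂, c i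

open Finset

theorem ConditionN.eq_of_sum_eq {h : ℕ} {c : Fin h → ℤ} (hN : ConditionN c)
    {I J : Finset (Fin h)} (hIJ : ∑ i ∈ I, c i = ∑ i ∈ J, c i) : I = J := by
  by_contra hne
  refine hN ⟨I \ J, J \ I, disjoint_sdiff_sdiff, ?_, ?_⟩
  · by_contra! hempty
    simp only [sdiff_eq_empty_iff_subset] at hempty
    exact hne (hempty.1.antisymm hempty.2)
  · have hI := sum_inter_add_sum_sdiff I J c
    have hJ := sum_inter_add_sum_sdiff J I c
    rw [inter_comm] at hJ
    linarith

theorem abs_sum_mul_sub_sum_mul_le {ι R : Type*} [CommRing R] [LinearOrder R]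
    [IsStrictOrderedRing R] (s : Finset ι) (c x y : ι → R) {B : R}
    (hx : ∀ i ∈ s, x i ∈ Set.Icc 0 B) (hy : ∀ i ∈ s, y i ∈ Set.Icc 0 B) :
    |∑ i ∈ s, c i * x i - ∑ i ∈ s, c i * y i| ≤ (∑ i ∈ s, |c i|) * B := by
  rw [← sum_sub_distrib, sum_mul]
  refine (abs_sum_le_sum_abs _ _).trans (sum_le_sum fun i hi => ?_)
  obtain ⟨hx0, hxB⟩ := hx i hi
  obtain ⟨hy0, hyB⟩ := hy i hi
  rw [← mul_sub, abs_mul]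
  exact mul_le_mul_of_nonneg_left (abs_sub_le_of_nonneg_of_le hx0 hxB hy0 hyB) (abs_nonneg _)

theorem sum_mul_comp_eq_add {ι R : Type*} [CommRing R] (s : Finset ι) (c : ι → R) (b : ℕ → R)
    (u : ι → ℕ) (n : ℕ) :
    ∑ i ∈ s, c i * b (u i) =
      (∑ i ∈ s with u i = n, c i) * b n + ∑ i ∈ s, c i * (if u i = n then 0 else b (u i)) := by
  rw [sum_filter, sum_mul, ← sum_add_distrib]
  refine sum_congr rfl fun i _ => ?_
  split_ifs with hi <;> simp [hi]

section Growth

variable {h : ℕ} {c : Fin h → ℤ} {b : ℕ → ℤ}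

theorem sum_filter_top_eq_of_sum_mul_eq (hN : ConditionN c) (hb0 : ∀ k, 0 ≤ b k)
    (hb : Monotone b) (hgrow : ∀ k, (∑ i, |c i|) * b k < b (k + 1)) {N : ℕ}
    {f g : Fin h → ℕ} (hf : ∀ i, f i ≤ N + 1) (hg : ∀ i, g i ≤ N + 1)
    (hsum : ∑ i, c i * b (f i) = ∑ i, c i * b (g i)) :
    univ.filter (fun i => f i = N + 1) = univ.filter (fun i => g i = N + 1) := by
  refine hN.eq_of_sum_eq ?_
  have hlow : ∀ u : Fin h → ℕ, (∀ i, u i ≤ N + 1) →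
      ∀ i ∈ univ, (if u i = N + 1 then 0 else b (u i)) ∈ Set.Icc 0 (b N) := by
    intro u hu i _
    split_ifs with hi
    · exact ⟨le_rfl, hb0 N⟩
    · exact ⟨hb0 _, hb (by have := hu i; omega)⟩
  have hdiff := abs_sum_mul_sub_sum_mul_le univ c _ _ (hlow g hg) (hlow f hf)
  rw [sum_mul_comp_eq_add univ c b f (N + 1), sum_mul_comp_eq_add univ c b g (N + 1)] at hsum
  have htop : |(∑ i with f i = N + 1, c i - ∑ i with g i = N + 1, c i) * b (N + 1)|
      < 1 * b (N + 1) := by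
    calc _ = |∑ i, c i * (if g i = N + 1 then 0 else b (g i))
              - ∑ i, c i * (if f i = N + 1 then 0 else b (f i))| := by
            congr 1; linear_combination hsum
      _ ≤ (∑ i, |c i|) * b N := hdiff
      _ < 1 * b (N + 1) := by rw [one_mul]; exact hgrow N
  rw [abs_mul, abs_of_nonneg (hb0 _)] at htop
  have := lt_of_mul_lt_mul_right htop (hb0 _)
  rwa [Int.abs_lt_one_iff, sub_eq_zero] at this

theorem eq_of_sum_mul_eq (hN : ConditionN c) (hb0 : ∀ k, 0 ≤ b k)
    (hb : Monotone b) (hgrow : ∀ k, (∑ i, |c i|) * b k < b (k + 1)) (N : ℕ) :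
    ∀ f g : Fin h → ℕ, (∀ i, f i ≤ N) → (∀ i, g i ≤ N) →
      ∑ i, c i * b (f i) = ∑ i, c i * b (g i) → f = g := by
  induction N with
  | zero =>
    intro f g hf hg _
    funext i
    have := hf i; have := hg i; omega
  | succ N ih =>
    intro f g hf hg hsum
    have htop : ∀ i, f i = N + 1 ↔ g i = N + 1 := by
      simpa [Finset.ext_iff] using
        sum_filter_top_eq_of_sum_mul_eq hN hb0 hb hgrow hf hg hsum
    -- As the top positions agree, sending the top index to `0` on both sides keeps the equation.
    let lower (u : Fin h → ℕ) (i : Fin h) : ℕ := if u i = N + 1 then 0 else u i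
    have hlower : lower f = lower g := by
      refine ih _ _ (fun i => ?_) (fun i => ?_) ?_
      · have := hf i; dsimp only [lower]; split_ifs <;> omega
      · have := hg i; dsimp only [lower]; split_ifs <;> omega
      · have hdiff : ∑ i, (c i * b (lower f i) - c i * b (lower g i)) =
            ∑ i, (c i * b (f i) - c i * b (g i)) := by
          refine sum_congr rfl fun i _ => ?_
          by_cases hi : f i = N + 1
          · simp [lower, hi, (htop i).mp hi]
          · simp [lower, hi, mt (htop i).mpr hi]
        rwa [sum_sub_distrib, sum_sub_distrib, hsum, sub_self, sub_eq_zero] at hdiff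
    funext i
    by_cases hi : f i = N + 1
    · rw [hi, (htop i).mp hi]
    · simpa [lower, hi, mt (htop i).mpr hi] using congrFun hlower i

theorem isSidon_range_of_growth (hN : ConditionN c) (hb0 : ∀ k, 0 ≤ b k)
    (hb : Monotone b) (hgrow : ∀ k, (∑ i, |c i|) * b k < b (k + 1)) :
    IsSidon c (Set.range b) := by
  intro a a' ha ha' hsum
  choose f hf using ha
  choose g hg using ha'
  obtain rfl : b ∘ f = a := funext hf
  obtain rfl : b ∘ g = a' := funext hg
  let N := univ.sup fun i => max (f i) (g i)
  have hle : ∀ i, max (f i) (g i) ≤ N := fun i =>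
    le_sup (f := fun i => max (f i) (g i)) (mem_univ i)
  rw [eq_of_sum_mul_eq hN hb0 hb hgrow N f g (fun i => (le_max_left _ _).trans (hle i))
    (fun i => (le_max_right _ _).trans (hle i)) hsum]

end Growth

theorem statement2_general {h : ℕ} (c : Fin h → ℤ) (hN : ConditionN c)
    (b : ℕ → ℤ) (hb : StrictMono b) (m : ℤ) (hm : 0 ≤ m)
    (hb1 : b 0 > m)
    (hgrow : ∀ k : ℕ, b (k + 1) > (∑ i, |c i|) * b k + ((∑ i, |c i|) + 1) * m) :
    ∃ (a : ℕ → ℤ) (m₀ : ℤ), 0 < m₀ ∧ IsSidon c (Set.range a) ∧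
      ∀ k : ℕ, |a k - b k| < m₀ := by
  have hb0 : ∀ k, 0 ≤ b k := fun k => hm.trans (hb1.le.trans (hb.monotone k.zero_le))
  have hC : 0 ≤ ∑ i, |c i| := sum_nonneg fun i _ => abs_nonneg _
  have hgrow' : ∀ k, (∑ i, |c i|) * b k < b (k + 1) := fun k => by
    linarith [hgrow k, mul_nonneg (add_nonneg hC zero_le_one) hm]
  exact ⟨b, 1, one_pos, isSidon_range_of_growth hN hb0 hb.monotone hgrow', fun k => by simp⟩

/-- If `B = {b₁ < b₂ < ⋯}` satisfies `b₁ > m` and `b_{k+1} > C·b_k + (C+1)·m`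
with `C = Σ|cᵢ|`, then there is a φ-Sidon set that is a bounded perturbation of
`B`.  (Sequences are indexed by `ℕ` starting at `0`.) -/
theorem statement2 {h : ℕ} (hh : 0 < h) (c : Fin h → ℤ) (hN : ConditionN c)
    (b : ℕ → ℤ) (hb : StrictMono b) (m : ℤ) (hm : 0 ≤ m)
    (hb1 : b 0 > m)
    (hgrow : ∀ k : ℕ, b (k + 1) > (∑ i, |c i|) * b k + ((∑ i, |c i|) + 1) * m) :
    ∃ (a : ℕ → ℤ) (m₀ : ℤ), 0 < m₀ ∧ IsSidon c (Set.range a) ∧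
      ∀ k : ℕ, |a k - b k| < m₀ :=
  statement2_general c hN b hb m hm hb1 hgrow
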